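/- The underlying undirected graph of G*(I,a,b) contains a subgraph isomorphic to the d-th subdivision of the underlying undirected graph of G. -/

import Mathlib

/-- A homomorphism of digraphs maps arcs to arcs. -/
def Digraph.IsHom {V W : Type*} (G : Digraph V) (H : Digraph W) (f : V → W) : Prop :=
  ∀ u v, G.Adj u v → H.Adj (f u) (f v)

/-- An oriented graph: at most one arc between any two vertices (hence no loops). -/
def Digraph.Oriented {V : Type*} (G : Digraph V) : Prop :=
  ∀ u v, G.Adj u v → ¬ G.Adj v u

/-- The arcs of a digraph. -/
def Digraph.Arcs {V : Type*} (G : Digraph V) : Type _ := {p : V × V // G.Adj p.1 p.2}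

/-- Vertex type of the replacement construction `G*(I,a,b)`: original vertices plus, for
each arc, the internal vertices of a copy of the cycle of length `L` with distinguished
vertices `a` (position `0`) and `b` (position `d+1`). -/
def RVert {V : Type*} (G : Digraph V) (L d : ℕ) : Type _ :=
  V ⊕ (G.Arcs × {i : Fin L // i.val ≠ 0 ∧ i.val ≠ d + 1})

/-- The vertex of `G*(I,a,b)` corresponding to position `i` on the cycle copy of arc `e`:
position `0` (the vertex `a`) is identified with the tail, position `d+1` (the vertex `b`)
with the head of `e`. -/
def toVert {V : Type*} (G : Digraph V) (L d : ℕ) (e : G.Arcs) (i : Fin L) : RVert G L d :=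
  if h0 : i.val = 0 then Sum.inl e.1.1
  else if h1 : i.val = d + 1 then Sum.inl e.1.2
  else Sum.inr (e, ⟨i, h0, h1⟩)

/-- Cyclic successor on `Fin m`. -/
def cyc {m : ℕ} (k : Fin m) : Fin m := ⟨(k.val + 1) % m, Nat.mod_lt _ k.pos⟩

/-- The replacement construction `G*(I,a,b)`: each arc of `G` is replaced by a disjoint copy
of the directed cycle of length `L` whose distinguished vertices `a`, `b` (at directed
distance `d+1` along the cycle) are identified with tail and head of the arc. -/
def Replace {V : Type*} (G : Digraph V) (L d : ℕ) : Digraph (RVert G L d) where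
  Adj x y := ∃ (e : G.Arcs) (i : Fin L), x = toVert G L d e i ∧ y = toVert G L d e (cyc i)

/-- Image of an arc under a digraph homomorphism. -/
def Digraph.mapArc {V W : Type*} (G : Digraph V) (H : Digraph W) (g : V → W)
    (hg : G.IsHom H g) : G.Arcs → H.Arcs :=
  fun e => ⟨(g e.1.1, g e.1.2), hg _ _ e.2⟩

/-- Action of the replacement functor on homomorphisms. -/
def RMap {V W : Type*} (G : Digraph V) (H : Digraph W) (L d : ℕ) (g : V → W)
    (hg : G.IsHom H g) : RVert G L d → RVert H L d :=
  Sum.map g (fun p => (G.mapArc H g hg p.1, p.2))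

/-- The underlying undirected (simple) graph of a digraph. -/
def Digraph.underlying {V : Type*} (G : Digraph V) : SimpleGraph V where
  Adj u v := u ≠ v ∧ (G.Adj u v ∨ G.Adj v u)
  symm := ⟨fun _ _ h => ⟨Ne.symm h.1, h.2.symm⟩⟩
  loopless := ⟨fun _ h => h.1 rfl⟩

/-- Auxiliary (oriented) relation of the `d`-th subdivision of a simple graph: each edge is
replaced by a path with `d` internal vertices; the smaller endpoint of an edge attaches at
position `0`, the larger at position `d-1`. For `d = 0`, original adjacency is kept. -/
def SubdivRel {V : Type*} [LinearOrder V] (H : SimpleGraph V) (d : ℕ) :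
    (V ⊕ (H.edgeSet × Fin d)) → (V ⊕ (H.edgeSet × Fin d)) → Prop
  | Sum.inl u, Sum.inl v => d = 0 ∧ H.Adj u v
  | Sum.inl u, Sum.inr (e, i) =>
      (i.val = 0 ∧ u ∈ e.val ∧ ∀ w ∈ e.val, u ≤ w) ∨
      (i.val = d - 1 ∧ u ∈ e.val ∧ ∀ w ∈ e.val, w ≤ u)
  | Sum.inr _, Sum.inl _ => False
  | Sum.inr (e, i), Sum.inr (e', j) => e = e' ∧ j.val = i.val + 1

/-- The `d`-th subdivision `Sub_d(H)` of a simple graph `H`: every edge is replaced by a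
path with `d` internal vertices. -/
def Subdiv {V : Type*} [LinearOrder V] (H : SimpleGraph V) (d : ℕ) :
    SimpleGraph (V ⊕ (H.edgeSet × Fin d)) where
  Adj x y := SubdivRel H d x y ∨ SubdivRel H d y x
  symm := ⟨fun _ _ h => h.symm⟩
  loopless := by
    constructor
    rintro (u | ⟨e, i⟩) h
    · rcases h with ⟨_, h⟩ | ⟨_, h⟩ <;> exact H.loopless.irrefl u h
    · rcases h with ⟨_, h⟩ | ⟨_, h⟩ <;> simp [SubdivRel] at h

/-- `f` embeds `H` as a (not necessarily induced) subgraph of `G`. -/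
def IsSubgraphEmb {V W : Type*} (H : SimpleGraph V) (G : SimpleGraph W) (f : V → W) : Prop :=
  Function.Injective f ∧ ∀ u v, H.Adj u v → G.Adj (f u) (f v)

/-- A class of finite graphs, one vertex set `Fin n` for each size. -/
abbrev GraphClass := Set (Σ n, SimpleGraph (Fin n))

/-- `H` is a subgraph of some member of the class `C`. -/
def ContainsAsSubgraph (C : GraphClass) {V : Type*} (H : SimpleGraph V) : Prop :=
  ∃ (n : ℕ) (G : SimpleGraph (Fin n)), ⟨n, G⟩ ∈ C ∧ ∃ f : V → Fin n, IsSubgraphEmb H G f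

/-- `C` is monotone: closed under taking (not necessarily induced) subgraphs. -/
def MonotoneClass (C : GraphClass) : Prop :=
  ∀ (n : ℕ) (G : SimpleGraph (Fin n)) (m : ℕ) (H : SimpleGraph (Fin m)),
    ⟨n, G⟩ ∈ C → (∃ f, IsSubgraphEmb H G f) → ⟨m, H⟩ ∈ C

/-- `C` is nowhere dense: for every `p` there is `N` such that the `p`-th subdivision of
`K_N` is a subgraph of no member of `C`. -/
def NowhereDense (C : GraphClass) : Prop :=
  ∀ p : ℕ, ∃ N : ℕ, ¬ ContainsAsSubgraph C (Subdiv (⊤ : SimpleGraph (Fin N)) p)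

/-!
Every edge `uv` of the underlying graph comes from an arc of `G`, say `u → v`. In `G*(I,a,b)` the
cycle replacing that arc contains the path `u = a, 1, …, d, b = v` of length `d + 1`, whose `d`
internal vertices belong to no other arc. Sending the `d` subdivision vertices of `uv` onto these
internal vertices, read in the direction of the arc, embeds `Sub_d` of the underlying graph.
-/

namespace Sym2

variable {α : Type*} [LinearOrder α]

theorem mk_inf_sup (s : Sym2 α) : s(s.inf, s.sup) = s :=
  sortEquiv.left_inv s

theorem inf_mem (s : Sym2 α) : s.inf ∈ s := by
  have h := mem_mk_left s.inf s.sup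
  rwa [mk_inf_sup] at h

theorem sup_mem (s : Sym2 α) : s.sup ∈ s := by
  have h := mem_mk_right s.inf s.sup
  rwa [mk_inf_sup] at h

theorem inf_le_of_mem {s : Sym2 α} {a : α} (h : a ∈ s) : s.inf ≤ a := by
  induction s with
  | _ x y => rcases mem_iff.mp h with rfl | rfl <;> simp

theorem le_sup_of_mem {s : Sym2 α} {a : α} (h : a ∈ s) : a ≤ s.sup := by
  induction s with
  | _ x y => rcases mem_iff.mp h with rfl | rfl <;> simp

theorem eq_inf_of_mem_of_forall_le {s : Sym2 α} {a : α} (ha : a ∈ s) (h : ∀ w ∈ s, a ≤ w) :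
    a = s.inf :=
  le_antisymm (h _ s.inf_mem) (inf_le_of_mem ha)

theorem eq_sup_of_mem_of_forall_ge {s : Sym2 α} {a : α} (ha : a ∈ s) (h : ∀ w ∈ s, w ≤ a) :
    a = s.sup :=
  le_antisymm (le_sup_of_mem ha) (h _ s.sup_mem)

end Sym2

section Subdivision

variable {V : Type*} [LinearOrder V] {H : SimpleGraph V} {d : ℕ}

def subdivPath (e : H.edgeSet) (k : Fin (d + 2)) : V ⊕ (H.edgeSet × Fin d) :=
  if h0 : k.val = 0 then .inl e.val.inf
  else if h : k.val ≤ d then .inr (e, ⟨k.val - 1, by omega⟩)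
  else .inl e.val.sup

@[simp]
theorem subdivPath_zero (e : H.edgeSet) : subdivPath (d := d) e 0 = .inl e.val.inf := rfl

@[simp]
theorem subdivPath_last (e : H.edgeSet) : subdivPath e (Fin.last (d + 1)) = .inl e.val.sup := by
  simp [subdivPath]

@[simp]
theorem subdivPath_castSucc_succ (e : H.edgeSet) (i : Fin d) :
    subdivPath e i.castSucc.succ = .inr (e, i) := by
  simp [subdivPath]

theorem exists_subdivPath_of_subdivRel {x y : V ⊕ (H.edgeSet × Fin d)} (h : SubdivRel H d x y) :
    ∃ (e : H.edgeSet) (k : Fin (d + 1)),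
      s(x, y) = s(subdivPath e k.castSucc, subdivPath e k.succ) := by
  rcases x with u | ⟨e, i⟩ <;> rcases y with v | ⟨e', j⟩
  · obtain ⟨rfl, huv⟩ := h
    refine ⟨⟨s(u, v), huv⟩, 0, ?_⟩
    rw [Fin.castSucc_zero, subdivPath_zero, show Fin.succ (0 : Fin 1) = Fin.last 1 from rfl,
      subdivPath_last, ← Sym2.map_mk, ← Sym2.map_mk, Sym2.mk_inf_sup]
  · rcases h with ⟨hi, hu, hmin⟩ | ⟨hi, hu, hmax⟩
    · refine ⟨e', 0, ?_⟩
      rw [Fin.castSucc_zero, subdivPath_zero, ← Sym2.eq_inf_of_mem_of_forall_le hu hmin,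
        show (0 : Fin (d + 1)).succ = j.castSucc.succ from Fin.ext (by simp [hi]),
        subdivPath_castSucc_succ]
    · refine ⟨e', Fin.last d, ?_⟩
      rw [Fin.succ_last, subdivPath_last, ← Sym2.eq_sup_of_mem_of_forall_ge hu hmax,
        show (Fin.last d).castSucc = j.castSucc.succ from Fin.ext (by simp; omega),
        subdivPath_castSucc_succ, Sym2.eq_swap]
  · exact h.elim
  · obtain ⟨rfl, hij⟩ := h
    refine ⟨e, i.succ, ?_⟩
    rw [Fin.castSucc_succ, subdivPath_castSucc_succ,
      show i.succ.succ = j.castSucc.succ from Fin.ext (by simp [hij]), subdivPath_castSucc_succ]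

theorem Subdiv.adj_map_of_adj_subdivPath {W : Type*} {G : SimpleGraph W}
    {f : V ⊕ (H.edgeSet × Fin d) → W}
    (hf : ∀ (e : H.edgeSet) (k : Fin (d + 1)),
      G.Adj (f (subdivPath e k.castSucc)) (f (subdivPath e k.succ)))
    {x y : V ⊕ (H.edgeSet × Fin d)} (hxy : (Subdiv H d).Adj x y) : G.Adj (f x) (f y) := by
  wlog h : SubdivRel H d x y generalizing x y
  · exact (this hxy.symm (hxy.resolve_left h)).symm
  obtain ⟨e, k, hek⟩ := exists_subdivPath_of_subdivRel h
  rcases Sym2.eq_iff.mp hek with ⟨rfl, rfl⟩ | ⟨rfl, rfl⟩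
  · exact hf e k
  · exact (hf e k).symm

end Subdivision

theorem Fin.eq_zero_or_eq_last_or_eq_castSucc_succ {d : ℕ} (k : Fin (d + 2)) :
    k = 0 ∨ k = Fin.last (d + 1) ∨ ∃ i : Fin d, k = i.castSucc.succ := by
  rcases Fin.eq_castSucc_or_eq_last k with ⟨j, rfl⟩ | rfl
  · rcases Fin.eq_zero_or_eq_succ j with rfl | ⟨i, rfl⟩
    · exact .inl rfl
    · exact .inr (.inr ⟨i, rfl⟩)
  · exact .inr (.inl rfl)

section Replacement

variable {V : Type*} {G : Digraph V} {L d : ℕ}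

def arcPath (hL : d + 2 ≤ L) (e : G.Arcs) (k : Fin (d + 2)) : RVert G L d :=
  toVert G L d e (Fin.castLE hL k)

@[simp]
theorem arcPath_zero (hL : d + 2 ≤ L) (e : G.Arcs) : arcPath hL e 0 = .inl e.1.1 := by
  unfold arcPath toVert
  exact dif_pos rfl

@[simp]
theorem arcPath_last (hL : d + 2 ≤ L) (e : G.Arcs) :
    arcPath hL e (Fin.last (d + 1)) = .inl e.1.2 := by
  unfold arcPath toVert
  exact (dif_neg (by simp)).trans (dif_pos (by simp))

theorem arcPath_castSucc_succ (hL : d + 2 ≤ L) (e : G.Arcs) (i : Fin d) :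
    arcPath hL e i.castSucc.succ =
      .inr (e, ⟨Fin.castLE hL i.castSucc.succ, by simp, by simp [i.isLt.ne]⟩) := by
  unfold arcPath toVert
  exact (dif_neg (by simp)).trans (dif_neg (by simp [i.isLt.ne]))

theorem arcPath_castSucc_succ_inj (hL : d + 2 ≤ L) {a a' : G.Arcs} {i j : Fin d}
    (h : arcPath hL a i.castSucc.succ = arcPath hL a' j.castSucc.succ) : a = a' ∧ i = j := by
  rw [arcPath_castSucc_succ, arcPath_castSucc_succ] at h
  have hp := Sum.inr.inj h
  exact ⟨congrArg Prod.fst hp, Fin.ext (by simpa using congrArg (fun p => p.2.1.val) hp)⟩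

theorem arcPath_injective (hL : d + 2 ≤ L) {e : G.Arcs} (he : e.1.1 ≠ e.1.2) :
    Function.Injective (arcPath hL e) := by
  intro k k' h
  rcases k.eq_zero_or_eq_last_or_eq_castSucc_succ with rfl | rfl | ⟨i, rfl⟩ <;>
  rcases k'.eq_zero_or_eq_last_or_eq_castSucc_succ with rfl | rfl | ⟨j, rfl⟩
  all_goals
    simp only [arcPath_zero, arcPath_last, arcPath_castSucc_succ] at h
    first
      | rfl
      | exact (he (Sum.inl.inj h)).elim
      | exact (he (Sum.inl.inj h).symm).elim
      | exact (Sum.inl_ne_inr h).elim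
      | exact (Sum.inr_ne_inl h).elim
      | exact Fin.ext (by simpa using congrArg (fun p => p.2.1.val) (Sum.inr.inj h))

theorem replace_adj_arcPath (hL : d + 2 ≤ L) (e : G.Arcs) (k : Fin (d + 1)) :
    (Replace G L d).Adj (arcPath hL e k.castSucc) (arcPath hL e k.succ) := by
  refine ⟨e, Fin.castLE hL k.castSucc, rfl, ?_⟩
  simp only [arcPath, cyc]
  congr 1
  ext
  simp only [Fin.val_castLE, Fin.val_castSucc, Fin.val_succ]
  exact (Nat.mod_eq_of_lt (by omega)).symm

theorem underlying_replace_adj_arcPath (hL : d + 2 ≤ L) {e : G.Arcs} (he : e.1.1 ≠ e.1.2)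
    (k : Fin (d + 1)) :
    (Replace G L d).underlying.Adj (arcPath hL e k.castSucc) (arcPath hL e k.succ) :=
  ⟨(arcPath_injective hL he).ne Fin.castSucc_lt_succ.ne, .inl (replace_adj_arcPath hL e k)⟩

end Replacement

section Embedding

variable {V : Type*} [LinearOrder V] {G : Digraph V} {L d : ℕ}

theorem Digraph.underlying_adj_inf_sup (e : G.underlying.edgeSet) :
    G.underlying.Adj e.val.inf e.val.sup := by
  rw [← SimpleGraph.mem_edgeSet, Sym2.mk_inf_sup]
  exact e.2

open Classical in
noncomputable def arcOf (e : G.underlying.edgeSet) : G.Arcs :=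
  if h : G.Adj e.val.inf e.val.sup then ⟨(e.val.inf, e.val.sup), h⟩
  else ⟨(e.val.sup, e.val.inf), (G.underlying_adj_inf_sup e).2.resolve_left h⟩

theorem arcOf_of_adj {e : G.underlying.edgeSet} (h : G.Adj e.val.inf e.val.sup) :
    arcOf e = ⟨(e.val.inf, e.val.sup), h⟩ :=
  dif_pos h

theorem arcOf_of_not_adj {e : G.underlying.edgeSet} (h : ¬ G.Adj e.val.inf e.val.sup) :
    arcOf e = ⟨(e.val.sup, e.val.inf), (G.underlying_adj_inf_sup e).2.resolve_left h⟩ :=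
  dif_neg h

theorem mk_arcOf (e : G.underlying.edgeSet) : s((arcOf e).1.1, (arcOf e).1.2) = e.val := by
  by_cases h : G.Adj e.val.inf e.val.sup
  · rw [arcOf_of_adj h]
    exact Sym2.mk_inf_sup _
  · rw [arcOf_of_not_adj h]
    exact Sym2.eq_swap.trans (Sym2.mk_inf_sup _)

theorem arcOf_injective : Function.Injective (arcOf (G := G)) := fun e e' h =>
  Subtype.ext ((mk_arcOf e).symm.trans (h ▸ mk_arcOf e'))

theorem arcOf_fst_ne_snd (e : G.underlying.edgeSet) : (arcOf e).1.1 ≠ (arcOf e).1.2 := by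
  have hne := (G.underlying_adj_inf_sup e).1
  by_cases h : G.Adj e.val.inf e.val.sup
  · rw [arcOf_of_adj h]
    exact hne
  · rw [arcOf_of_not_adj h]
    exact hne.symm

open Classical in
/-- The subdivision path of `e` runs from `e.inf` to `e.sup`, the cycle path of `arcOf e` from
its tail to its head: in the same direction or in the opposite one. -/
noncomputable def arcPos (e : G.underlying.edgeSet) {n : ℕ} : Equiv.Perm (Fin n) :=
  if G.Adj e.val.inf e.val.sup then Equiv.refl _ else Fin.revPerm

theorem arcPos_of_adj {e : G.underlying.edgeSet} (h : G.Adj e.val.inf e.val.sup) {n : ℕ} :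
    arcPos e = Equiv.refl (Fin n) :=
  if_pos h

theorem arcPos_of_not_adj {e : G.underlying.edgeSet} (h : ¬ G.Adj e.val.inf e.val.sup) {n : ℕ} :
    arcPos e = Fin.revPerm (n := n) :=
  if_neg h

theorem arcPos_castSucc_succ (e : G.underlying.edgeSet) {n : ℕ} (i : Fin n) :
    arcPos e i.castSucc.succ = (arcPos e i).castSucc.succ := by
  by_cases h : G.Adj e.val.inf e.val.sup
  · simp [arcPos_of_adj h]
  · simp [arcPos_of_not_adj h, Fin.rev_succ, Fin.rev_castSucc, Fin.castSucc_succ]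

theorem arcPath_arcOf_arcPos_zero (hL : d + 2 ≤ L) (e : G.underlying.edgeSet) :
    arcPath hL (arcOf e) (arcPos e 0) = .inl e.val.inf := by
  by_cases h : G.Adj e.val.inf e.val.sup
  · rw [arcOf_of_adj h, arcPos_of_adj h]
    exact arcPath_zero hL _
  · rw [arcOf_of_not_adj h, arcPos_of_not_adj h, Fin.revPerm_apply, Fin.rev_zero]
    exact arcPath_last hL _

theorem arcPath_arcOf_arcPos_last (hL : d + 2 ≤ L) (e : G.underlying.edgeSet) :
    arcPath hL (arcOf e) (arcPos e (Fin.last (d + 1))) = .inl e.val.sup := by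
  by_cases h : G.Adj e.val.inf e.val.sup
  · rw [arcOf_of_adj h, arcPos_of_adj h]
    exact arcPath_last hL _
  · rw [arcOf_of_not_adj h, arcPos_of_not_adj h, Fin.revPerm_apply, Fin.rev_last]
    exact arcPath_zero hL _

theorem underlying_replace_adj_arcPath_arcPos (hL : d + 2 ≤ L) (e : G.underlying.edgeSet)
    (k : Fin (d + 1)) :
    (Replace G L d).underlying.Adj (arcPath hL (arcOf e) (arcPos e k.castSucc))
      (arcPath hL (arcOf e) (arcPos e k.succ)) := by
  have hadj := underlying_replace_adj_arcPath hL (arcOf_fst_ne_snd e)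
  by_cases h : G.Adj e.val.inf e.val.sup
  · rw [arcPos_of_adj h]
    exact hadj k
  · rw [arcPos_of_not_adj h, Fin.revPerm_apply, Fin.revPerm_apply, Fin.rev_castSucc, Fin.rev_succ]
    exact (hadj k.rev).symm

noncomputable def subdivEmbedding (hL : d + 2 ≤ L) :
    V ⊕ (G.underlying.edgeSet × Fin d) → RVert G L d
  | .inl u => .inl u
  | .inr (e, i) => arcPath hL (arcOf e) (arcPos e i).castSucc.succ

theorem subdivEmbedding_subdivPath (hL : d + 2 ≤ L) (e : G.underlying.edgeSet)
    (k : Fin (d + 2)) :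
    subdivEmbedding hL (subdivPath e k) = arcPath hL (arcOf e) (arcPos e k) := by
  rcases k.eq_zero_or_eq_last_or_eq_castSucc_succ with rfl | rfl | ⟨i, rfl⟩
  · rw [subdivPath_zero, arcPath_arcOf_arcPos_zero]
    rfl
  · rw [subdivPath_last, arcPath_arcOf_arcPos_last]
    rfl
  · rw [subdivPath_castSucc_succ, arcPos_castSucc_succ]
    rfl

theorem subdivEmbedding_injective (hL : d + 2 ≤ L) :
    Function.Injective (subdivEmbedding (G := G) hL) := by
  rintro (u | ⟨e, i⟩) (v | ⟨e', j⟩) h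
  · exact congrArg Sum.inl (Sum.inl.inj h)
  · exact (Sum.inl_ne_inr (h.trans (arcPath_castSucc_succ hL _ _))).elim
  · exact (Sum.inr_ne_inl ((arcPath_castSucc_succ hL _ _).symm.trans h)).elim
  · obtain ⟨he, hij⟩ := arcPath_castSucc_succ_inj hL h
    obtain rfl := arcOf_injective he
    rw [(arcPos e).injective hij]

theorem isSubgraphEmb_subdivEmbedding (hL : d + 2 ≤ L) :
    IsSubgraphEmb (Subdiv G.underlying d) (Replace G L d).underlying (subdivEmbedding hL) := by
  refine ⟨subdivEmbedding_injective hL, fun x y hxy => ?_⟩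
  refine Subdiv.adj_map_of_adj_subdivPath (fun e k => ?_) hxy
  rw [subdivEmbedding_subdivPath, subdivEmbedding_subdivPath]
  exact underlying_replace_adj_arcPath_arcPos hL e k

end Embedding

/-- The underlying undirected graph of `G*(I,a,b)` contains a subgraph
isomorphic to the `d`-th subdivision of the underlying undirected graph of `G`. -/
theorem stmt4 {V : Type*} [LinearOrder V] (d : ℕ) (G : Digraph V) :
    ∃ f, IsSubgraphEmb (Subdiv G.underlying d)
      (Replace G (3 * (d + 1)) d).underlying f :=
  ⟨_, isSubgraphEmb_subdivEmbedding (by omega)⟩
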